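/- arXiv:2105.05026 — 2 statements merged into one kernel-verified Lean document; each statement's English description precedes it below -/
import Mathlib

section
/- Let ℓ: ℝ → ℝ satisfy 1[z ≤ 0] ≤ ℓ(z) for all z ∈ ℝ. Then for every c ≥ 2, every nontrivial y ∈ {−1,+1}^c and every v ∈ ℝ^c: L_r(v,y) ≤ L_{u4}(v,y) ≤ c·L_{u2}(v,y). -/
open scoped Classical BigOperators

/-- The set of positive-label indices of `y ∈ {-1,+1}^c`. -/
noncomputable def Sp {c : ℕ} (y : Fin c → ℝ) : Finset (Fin c) :=
  Finset.univ.filter (fun j => y j = 1)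

/-- The set of negative-label indices of `y ∈ {-1,+1}^c`. -/
noncomputable def Sm {c : ℕ} (y : Fin c → ℝ) : Finset (Fin c) :=
  Finset.univ.filter (fun j => y j = -1)

/-- The ranking loss `L_r`. -/
noncomputable def Lr {c : ℕ} (v y : Fin c → ℝ) : ℝ :=
  (1 / (((Sp y).card : ℝ) * ((Sm y).card : ℝ))) *
    ∑ p ∈ Sp y, ∑ q ∈ Sm y, (if v p ≤ v q then (1 : ℝ) else 0)

/-- The univariate surrogate loss `L_{u2}`. -/
noncomputable def Lu2 {c : ℕ} (ℓ : ℝ → ℝ) (v y : Fin c → ℝ) : ℝ :=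
  (1 / (((Sp y).card : ℝ) * ((Sm y).card : ℝ))) * ∑ j, ℓ (y j * v j)

/-- The reweighted univariate surrogate loss `L_{u4}`. -/
noncomputable def Lu4 {c : ℕ} (ℓ : ℝ → ℝ) (v y : Fin c → ℝ) : ℝ :=
  (1 / ((min (Sp y).card (Sm y).card : ℕ) : ℝ)) * ∑ j, ℓ (y j * v j)

/-!
A pair `(p, q)` is misranked only if `v_p ≤ 0` or `-v_q ≤ 0`, so its indicator is at most
`ℓ(v_p) + ℓ(-v_q)`. Summing over all `a · b` pairs (`a = |S⁺|`, `b = |S⁻|`) bounds `L_r` by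
`L⁺/a + L⁻/b ≤ (L⁺ + L⁻)/min(a, b)`, where `L^±` are the total univariate losses on the two
label classes. For the second inequality, `a · b = max(a, b) · min(a, b) ≤ c · min(a, b)`.
-/

section Surrogate

variable {ℓ : ℝ → ℝ}

lemma nonneg_of_forall_ite_le (hind : ∀ z : ℝ, (if z ≤ 0 then (1 : ℝ) else 0) ≤ ℓ z) (z : ℝ) :
    0 ≤ ℓ z :=
  (by split_ifs <;> norm_num : (0 : ℝ) ≤ if z ≤ 0 then 1 else 0).trans (hind z)

lemma ite_le_add_of_forall_ite_le
    (hind : ∀ z : ℝ, (if z ≤ 0 then (1 : ℝ) else 0) ≤ ℓ z) (s t : ℝ) :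
    (if s ≤ t then (1 : ℝ) else 0) ≤ ℓ s + ℓ (-t) := by
  have hs := hind s
  have ht := hind (-t)
  have hs0 := nonneg_of_forall_ite_le hind s
  have ht0 := nonneg_of_forall_ite_le hind (-t)
  by_cases hst : s ≤ t
  · rcases le_total s 0 with h | h
    · simp only [if_pos hst, if_pos h] at hs ⊢
      linarith
    · simp only [if_pos hst, if_pos (by linarith : -t ≤ 0)] at ht ⊢
      linarith
  · simp only [if_neg hst]
    positivity

lemma sum_sum_ite_le_of_forall_ite_le {ι : Type*}
    (hind : ∀ z : ℝ, (if z ≤ 0 then (1 : ℝ) else 0) ≤ ℓ z) (v : ι → ℝ) (P N : Finset ι) :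
    ∑ p ∈ P, ∑ q ∈ N, (if v p ≤ v q then (1 : ℝ) else 0) ≤
      N.card * ∑ p ∈ P, ℓ (v p) + P.card * ∑ q ∈ N, ℓ (-v q) :=
  calc ∑ p ∈ P, ∑ q ∈ N, (if v p ≤ v q then (1 : ℝ) else 0)
      ≤ ∑ p ∈ P, ∑ q ∈ N, (ℓ (v p) + ℓ (-v q)) :=
        Finset.sum_le_sum fun p _ ↦ Finset.sum_le_sum fun q _ ↦
          ite_le_add_of_forall_ite_le hind (v p) (v q)
    _ = N.card * ∑ p ∈ P, ℓ (v p) + P.card * ∑ q ∈ N, ℓ (-v q) := by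
        simp only [Finset.sum_add_distrib, Finset.sum_const, nsmul_eq_mul, Finset.mul_sum]

end Surrogate

lemma disjoint_Sp_Sm {c : ℕ} (y : Fin c → ℝ) : Disjoint (Sp y) (Sm y) :=
  Finset.disjoint_filter.mpr fun j _ h ↦ by norm_num [h]

lemma card_Sp_add_card_Sm_le {c : ℕ} (y : Fin c → ℝ) : (Sp y).card + (Sm y).card ≤ c := by
  rw [← Finset.card_union_of_disjoint (disjoint_Sp_Sm y)]
  simpa using Finset.card_le_univ (Sp y ∪ Sm y)

lemma sum_Sp_add_sum_Sm_le_sum {c : ℕ} {ℓ : ℝ → ℝ} (hℓ : ∀ z, 0 ≤ ℓ z) (v y : Fin c → ℝ) :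
    ∑ p ∈ Sp y, ℓ (v p) + ∑ q ∈ Sm y, ℓ (-v q) ≤ ∑ j, ℓ (y j * v j) := by
  have hP : ∑ p ∈ Sp y, ℓ (v p) = ∑ p ∈ Sp y, ℓ (y p * v p) :=
    Finset.sum_congr rfl fun p hp ↦ by rw [(Finset.mem_filter.mp hp).2, one_mul]
  have hN : ∑ q ∈ Sm y, ℓ (-v q) = ∑ q ∈ Sm y, ℓ (y q * v q) :=
    Finset.sum_congr rfl fun q hq ↦ by rw [(Finset.mem_filter.mp hq).2, neg_one_mul]
  rw [hP, hN, ← Finset.sum_union (disjoint_Sp_Sm y)]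
  exact Finset.sum_le_univ_sum_of_nonneg fun j ↦ hℓ _

lemma weighted_mean_le_div_min (a b : ℕ) {S T : ℝ} (hS : 0 ≤ S) (hT : 0 ≤ T) :
    1 / ((a : ℝ) * b) * (b * S + a * T) ≤ 1 / ((min a b : ℕ) : ℝ) * (S + T) := by
  rcases Nat.eq_zero_or_pos a with rfl | ha
  · simp
  rcases Nat.eq_zero_or_pos b with rfl | hb
  · simp
  have hm : (0 : ℝ) < (min a b : ℕ) := by exact_mod_cast lt_min ha hb
  calc 1 / ((a : ℝ) * b) * (b * S + a * T) = S / a + T / b := by field_simp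
    _ ≤ S / (min a b : ℕ) + T / (min a b : ℕ) := by
        gcongr
        · exact_mod_cast min_le_left a b
        · exact_mod_cast min_le_right a b
    _ = 1 / ((min a b : ℕ) : ℝ) * (S + T) := by ring

lemma one_div_min_le_mul_one_div_mul {a b c : ℕ} (habc : a + b ≤ c) :
    1 / ((min a b : ℕ) : ℝ) ≤ c * (1 / ((a : ℝ) * b)) := by
  rcases Nat.eq_zero_or_pos (min a b) with hm | hm
  · rw [hm]
    simp only [Nat.cast_zero, div_zero]
    positivity
  have ha : (0 : ℝ) < a := by exact_mod_cast (lt_min_iff.mp hm).1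
  have hb : (0 : ℝ) < b := by exact_mod_cast (lt_min_iff.mp hm).2
  have hab : a * b ≤ c * min a b :=
    calc a * b = max a b * min a b := by rw [mul_comm (max a b), min_mul_max]
      _ ≤ c * min a b :=
        Nat.mul_le_mul_right _ ((max_le_add_of_nonneg a.zero_le b.zero_le).trans habc)
  rw [mul_one_div, div_le_div_iff₀ (by exact_mod_cast hm) (by positivity), one_mul]
  exact_mod_cast hab

theorem stmt3_general (ℓ : ℝ → ℝ)
    (hind : ∀ z : ℝ, (if z ≤ 0 then (1 : ℝ) else 0) ≤ ℓ z)
    (c : ℕ)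
    (y : Fin c → ℝ)
    (v : Fin c → ℝ) :
    Lr v y ≤ Lu4 ℓ v y ∧ Lu4 ℓ v y ≤ (c : ℝ) * Lu2 ℓ v y := by
  have hℓ := nonneg_of_forall_ite_le hind
  have hP : 0 ≤ ∑ p ∈ Sp y, ℓ (v p) := Finset.sum_nonneg fun p _ ↦ hℓ _
  have hN : 0 ≤ ∑ q ∈ Sm y, ℓ (-v q) := Finset.sum_nonneg fun q _ ↦ hℓ _
  have htotal := sum_Sp_add_sum_Sm_le_sum hℓ v y
  constructor
  · calc Lr v y
        ≤ 1 / (((Sp y).card : ℝ) * (Sm y).card) *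
            ((Sm y).card * ∑ p ∈ Sp y, ℓ (v p) + (Sp y).card * ∑ q ∈ Sm y, ℓ (-v q)) :=
          mul_le_mul_of_nonneg_left (sum_sum_ite_le_of_forall_ite_le hind v _ _) (by positivity)
      _ ≤ 1 / ((min (Sp y).card (Sm y).card : ℕ) : ℝ) *
            (∑ p ∈ Sp y, ℓ (v p) + ∑ q ∈ Sm y, ℓ (-v q)) := weighted_mean_le_div_min _ _ hP hN
      _ ≤ Lu4 ℓ v y := mul_le_mul_of_nonneg_left htotal (by positivity)
  · calc Lu4 ℓ v y
        ≤ c * (1 / (((Sp y).card : ℝ) * (Sm y).card)) * ∑ j, ℓ (y j * v j) :=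
          mul_le_mul_of_nonneg_right (one_div_min_le_mul_one_div_mul (card_Sp_add_card_Sm_le y))
            (by linarith)
      _ = c * Lu2 ℓ v y := by rw [Lu2, mul_assoc]

theorem stmt3 (ℓ : ℝ → ℝ)
    (hind : ∀ z : ℝ, (if z ≤ 0 then (1 : ℝ) else 0) ≤ ℓ z)
    (c : ℕ) (hc : 2 ≤ c)
    (y : Fin c → ℝ) (hy : ∀ j, y j = 1 ∨ y j = -1)
    (hyp : (Sp y).Nonempty) (hym : (Sm y).Nonempty)
    (v : Fin c → ℝ) :
    Lr v y ≤ Lu4 ℓ v y ∧ Lu4 ℓ v y ≤ (c : ℝ) * Lu2 ℓ v y :=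
  stmt3_general ℓ hind c y v
end

section
/- Let c ≥ 1, let β⁺, β⁻: {−1,+1}^c → (0,∞) be positive penalty functions, and let P be a probability distribution on {−1,+1}^c such that φ_j^+(P) > 0 and φ_j^-(P) > 0 for every j ∈ {1,…,c}. Then the conditional surrogate risk f ↦ Σ_{y∈{−1,+1}^c} P(y)·L_u(f,y), with base loss ℓ(z) = ln(1 + e^{−z}), has a unique global minimizer f* over ℝ^c, given coordinatewise by f*_j = ln(φ_j^+(P)/φ_j^-(P)). -/
open scoped BigOperators

/-- The sign value of a Boolean label: `true ↦ +1`, `false ↦ -1`. -/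
def toSign (b : Bool) : ℝ := if b then 1 else -1

/-- The general reweighted univariate surrogate loss `L_u`. -/
noncomputable def Lu {c : ℕ} (βp βm : (Fin c → Bool) → ℝ) (ℓ : ℝ → ℝ)
    (v : Fin c → ℝ) (y : Fin c → Bool) : ℝ :=
  ∑ j, (if y j then βp y else βm y) * ℓ (toSign (y j) * v j)

/-- The conditional surrogate risk. -/
noncomputable def risk {c : ℕ} (βp βm : (Fin c → Bool) → ℝ) (ℓ : ℝ → ℝ)
    (P : (Fin c → Bool) → ℝ) (f : Fin c → ℝ) : ℝ :=
  ∑ y, P y * Lu βp βm ℓ f y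

/-- `φ_j^+(P)`. -/
def phiP {c : ℕ} (β P : (Fin c → Bool) → ℝ) (j : Fin c) : ℝ :=
  ∑ y ∈ Finset.univ.filter (fun y : Fin c → Bool => y j = true), β y * P y

/-- `φ_j^-(P)`. -/
def phiM {c : ℕ} (β P : (Fin c → Bool) → ℝ) (j : Fin c) : ℝ :=
  ∑ y ∈ Finset.univ.filter (fun y : Fin c → Bool => y j = false), β y * P y

/-!
The risk splits over coordinates: the `j`-th summand is `a ℓ(t) + b ℓ(-t)` with `a = φ_j^+(P)`,
`b = φ_j^-(P)`, and for the logistic loss this equals `(a + b) log (1 + eᵗ) - a t`. Writing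
`t = log (a / b) + s`, its excess over the value at `log (a / b)` is
`(a + b) log ((b + a eˢ) / (a + b)) - a s`, which is positive for `s ≠ 0` by strict convexity of `exp`.
-/

noncomputable def logisticRisk (a b t : ℝ) : ℝ :=
  a * Real.log (1 + Real.exp (-t)) + b * Real.log (1 + Real.exp t)

lemma logisticRisk_eq (a b t : ℝ) :
    logisticRisk a b t = (a + b) * Real.log (1 + Real.exp t) - a * t := by
  have h : 1 + Real.exp (-t) = (1 + Real.exp t) * Real.exp (-t) := by
    rw [add_mul, ← Real.exp_add, add_neg_cancel, Real.exp_zero, one_mul, add_comm]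
  rw [logisticRisk, h, Real.log_mul (by positivity) (Real.exp_ne_zero _), Real.log_exp]
  ring

lemma mul_lt_mul_log_add_mul_exp {a b s : ℝ} (ha : 0 < a) (hb : 0 < b) (hs : s ≠ 0) :
    a * s < (a + b) * Real.log ((b + a * Real.exp s) / (a + b)) := by
  have hab : 0 < a + b := add_pos ha hb
  have hconv := strictConvexOn_exp.2 (Set.mem_univ 0) (Set.mem_univ s) hs.symm
    (div_pos hb hab) (div_pos ha hab) (by field_simp; ring)
  simp only [smul_eq_mul, mul_zero, zero_add, Real.exp_zero, mul_one] at hconv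
  have hlog : a / (a + b) * s < Real.log ((b + a * Real.exp s) / (a + b)) := by
    rw [Real.lt_log_iff_exp_lt (by positivity), add_div, mul_div_right_comm]
    exact hconv
  calc a * s = (a + b) * (a / (a + b) * s) := by field_simp
    _ < _ := mul_lt_mul_of_pos_left hlog hab

lemma logisticRisk_log_div_lt {a b t : ℝ} (ha : 0 < a) (hb : 0 < b) (ht : t ≠ Real.log (a / b)) :
    logisticRisk a b (Real.log (a / b)) < logisticRisk a b t := by
  set s := t - Real.log (a / b)
  have hexp : b * Real.exp t = a * Real.exp s := by
    rw [Real.exp_sub, Real.exp_log (div_pos ha hb)]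
    field_simp
  have hlt := mul_lt_mul_log_add_mul_exp ha hb (sub_ne_zero.mpr ht)
  rw [← hexp, ← mul_one_add, mul_div_assoc,
    Real.log_mul hb.ne' (div_pos (by positivity) (add_pos ha hb)).ne',
    Real.log_div (by positivity) (add_pos ha hb).ne'] at hlt
  have hstar : 1 + Real.exp (Real.log (a / b)) = (a + b) / b := by
    rw [Real.exp_log (div_pos ha hb)]
    field_simp
    ring
  rw [logisticRisk_eq, logisticRisk_eq, hstar, Real.log_div (add_pos ha hb).ne' hb.ne']
  linarith

lemma risk_eq_sum_phi {c : ℕ} (βp βm : (Fin c → Bool) → ℝ) (ℓ : ℝ → ℝ)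
    (P : (Fin c → Bool) → ℝ) (f : Fin c → ℝ) :
    risk βp βm ℓ P f = ∑ j, (phiP βp P j * ℓ (f j) + phiM βm P j * ℓ (-f j)) := by
  unfold risk Lu
  simp_rw [Finset.mul_sum]
  rw [Finset.sum_comm]
  refine Finset.sum_congr rfl fun j _ => ?_
  rw [phiP, phiM, Finset.sum_filter, Finset.sum_filter, Finset.sum_mul, Finset.sum_mul,
    ← Finset.sum_add_distrib]
  refine Finset.sum_congr rfl fun y _ => ?_
  cases y j <;> simp only [toSign, Bool.false_eq_true, Bool.true_eq_false, ↓reduceIte, neg_mul,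
    one_mul, zero_mul, zero_add, add_zero] <;> ring

lemma risk_logistic_eq_sum {c : ℕ} (βp βm : (Fin c → Bool) → ℝ)
    (P : (Fin c → Bool) → ℝ) (f : Fin c → ℝ) :
    risk βp βm (fun z => Real.log (1 + Real.exp (-z))) P f
      = ∑ j, logisticRisk (phiP βp P j) (phiM βm P j) (f j) := by
  simp only [risk_eq_sum_phi, neg_neg, logisticRisk]

section Separable

variable {ι : Type*} [Fintype ι] {g : ι → ℝ → ℝ} {x : ι → ℝ}

lemma sum_lt_sum_of_forall_lt (hg : ∀ i t, t ≠ x i → g i (x i) < g i t) {f : ι → ℝ}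
    (hf : f ≠ x) : ∑ i, g i (x i) < ∑ i, g i (f i) := by
  have hle : ∀ i, g i (x i) ≤ g i (f i) := fun i =>
    (eq_or_ne (f i) (x i)).elim (fun h => h ▸ le_rfl) fun h => (hg i _ h).le
  obtain ⟨i, hi⟩ := Function.ne_iff.mp hf
  exact Finset.sum_lt_sum (fun i _ => hle i) ⟨i, Finset.mem_univ i, hg i (f i) hi⟩

lemma sum_le_sum_of_forall_lt (hg : ∀ i t, t ≠ x i → g i (x i) < g i t) (f : ι → ℝ) :
    ∑ i, g i (x i) ≤ ∑ i, g i (f i) := by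
  rcases eq_or_ne f x with rfl | hf
  · exact le_rfl
  · exact (sum_lt_sum_of_forall_lt hg hf).le

end Separable

theorem stmt10_general (c : ℕ)
    (βp βm : (Fin c → Bool) → ℝ)
    (P : (Fin c → Bool) → ℝ)
    (hφp : ∀ j, 0 < phiP βp P j) (hφm : ∀ j, 0 < phiM βm P j)
    (fstar : Fin c → ℝ)
    (hfstar : ∀ j, fstar j = Real.log (phiP βp P j / phiM βm P j)) :
    (∀ f : Fin c → ℝ,
        risk βp βm (fun z => Real.log (1 + Real.exp (-z))) P fstar ≤
          risk βp βm (fun z => Real.log (1 + Real.exp (-z))) P f) ∧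
      (∀ f : Fin c → ℝ,
        (∀ g : Fin c → ℝ,
            risk βp βm (fun z => Real.log (1 + Real.exp (-z))) P f ≤
              risk βp βm (fun z => Real.log (1 + Real.exp (-z))) P g) →
          f = fstar) := by
  have hcoord : ∀ j t, t ≠ fstar j → logisticRisk (phiP βp P j) (phiM βm P j) (fstar j) <
      logisticRisk (phiP βp P j) (phiM βm P j) t := fun j t ht => by
    rw [hfstar j] at ht ⊢
    exact logisticRisk_log_div_lt (hφp j) (hφm j) ht
  simp only [risk_logistic_eq_sum]
  refine ⟨sum_le_sum_of_forall_lt hcoord, fun f hf => ?_⟩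
  by_contra hne
  exact (hf fstar).not_gt (sum_lt_sum_of_forall_lt hcoord hne)

theorem stmt10 (c : ℕ) (hc : 1 ≤ c)
    (βp βm : (Fin c → Bool) → ℝ) (hβp : ∀ y, 0 < βp y) (hβm : ∀ y, 0 < βm y)
    (P : (Fin c → Bool) → ℝ) (hP : ∀ y, 0 ≤ P y) (hP1 : (∑ y, P y) = 1)
    (hφp : ∀ j, 0 < phiP βp P j) (hφm : ∀ j, 0 < phiM βm P j)
    (fstar : Fin c → ℝ)
    (hfstar : ∀ j, fstar j = Real.log (phiP βp P j / phiM βm P j)) :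
    (∀ f : Fin c → ℝ,
        risk βp βm (fun z => Real.log (1 + Real.exp (-z))) P fstar ≤
          risk βp βm (fun z => Real.log (1 + Real.exp (-z))) P f) ∧
      (∀ f : Fin c → ℝ,
        (∀ g : Fin c → ℝ,
            risk βp βm (fun z => Real.log (1 + Real.exp (-z))) P f ≤
              risk βp βm (fun z => Real.log (1 + Real.exp (-z))) P g) →
          f = fstar) :=
  stmt10_general c βp βm P hφp hφm fstar hfstar
end
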